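/- arXiv:1906.11945 — 2 statements merged into one kernel-verified Lean document; each statement's English description precedes it below -/
import Mathlib

section
/- For any integer γ ≥ 4 and any integer n ≥ 2, define λ_i = Σ_{ℓ=1}^∞ γ^{-(i-1)β_n(ℓ)} for 2 ≤ i ≤ n, where β_n(ℓ) = (1 - n^ℓ)/(1 - n), and λ_1 = 1. Then Σ_{i=1}^n λ_i < (γ-1)/(γ-2). -/
/-!
Since `β (ℓ + 1) ≥ ℓ + 1`, for `i ≥ 2` the terms of `λ_i` are dominated by the geometric series
`r ^ (i - 1 + ℓ)` with `r = γ⁻¹`, so `λ_i ≤ r ^ (i - 1) / (1 - r)`. Summing over `i` gives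
`∑ λ_i ≤ 1 + r / (1 - r) ^ 2 = 1 + γ / (γ - 1) ^ 2`, which is below `1 + 1 / (γ - 2)` because
`γ (γ - 2) < (γ - 1) ^ 2`.
-/

open Finset

lemma le_sum_range_pow {n : ℕ} (hn : 1 ≤ n) (ℓ : ℕ) : ℓ ≤ ∑ k ∈ range ℓ, n ^ k := by
  simpa using card_nsmul_le_sum (range ℓ) (n ^ ·) 1 fun k _ => Nat.one_le_pow k n hn

lemma tsum_pow_le_of_add_le {r : ℝ} (hr₀ : 0 ≤ r) (hr₁ : r < 1) {k : ℕ} {e : ℕ → ℕ}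
    (he : ∀ ℓ, k + ℓ ≤ e ℓ) : ∑' ℓ, r ^ e ℓ ≤ r ^ k / (1 - r) := by
  have hle : ∀ ℓ, r ^ e ℓ ≤ r ^ k * r ^ ℓ := fun ℓ => by
    rw [← pow_add]
    exact pow_le_pow_of_le_one hr₀ hr₁.le (he ℓ)
  have hgeom : Summable fun ℓ => r ^ k * r ^ ℓ :=
    (summable_geometric_of_lt_one hr₀ hr₁).mul_left _
  calc ∑' ℓ, r ^ e ℓ ≤ ∑' ℓ, r ^ k * r ^ ℓ :=
        (hgeom.of_nonneg_of_le (fun ℓ => by positivity) hle).tsum_le_tsum hle hgeom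
    _ = r ^ k / (1 - r) := by
        rw [tsum_mul_left, tsum_geometric_of_lt_one hr₀ hr₁, div_eq_mul_inv]

lemma sum_Ioc_one_pow_sub_one_le {r : ℝ} (hr₀ : 0 ≤ r) (hr₁ : r < 1) (n : ℕ) :
    ∑ i ∈ Ioc 1 n, r ^ (i - 1) ≤ r / (1 - r) := by
  rw [← Ico_add_one_add_one_eq_Ioc, sum_Ico_add_right_sub_eq (f := (r ^ ·))]
  simpa using geom_sum_Ico_le_of_lt_one (m := 1) (n := n) hr₀ hr₁

lemma one_add_inv_div_one_sub_inv_sq_lt {x : ℝ} (hx : 2 < x) :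
    1 + x⁻¹ / (1 - x⁻¹) ^ 2 < (x - 1) / (x - 2) := by
  have hx₁ : 0 < x - 1 := by linarith
  have hx₂ : 0 < x - 2 := by linarith
  have : x⁻¹ / (1 - x⁻¹) ^ 2 = x / (x - 1) ^ 2 := by
    field_simp
  rw [this, add_div' _ _ _ (by positivity), div_lt_div_iff₀ (by positivity) hx₂]
  nlinarith

/-- For integers `γ ≥ 4` and `n ≥ 2`, with `β_n ℓ = 1 + n + ⋯ + n^(ℓ-1)`,
`λ_1 = 1`, and `λ_i = ∑_{ℓ=1}^∞ γ^{-(i-1) β_n ℓ}` for `2 ≤ i ≤ n`,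
one has `∑_{i=1}^n λ_i < (γ-1)/(γ-2)`. -/
theorem sprecher_lambda_sum_lt (n γ : ℕ) (hn : 2 ≤ n) (hγ : 4 ≤ γ)
    (β : ℕ → ℕ) (hβ : ∀ ℓ, β ℓ = ∑ k ∈ Finset.range ℓ, n ^ k)
    (lam : ℕ → ℝ) (hlam1 : lam 1 = 1)
    (hlam : ∀ i, 2 ≤ i → i ≤ n →
      lam i = ∑' ℓ : ℕ, ((γ : ℝ) ^ ((i - 1) * β (ℓ + 1)))⁻¹) :
    ∑ i ∈ Finset.Icc 1 n, lam i < ((γ : ℝ) - 1) / ((γ : ℝ) - 2) := by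
  have hγ₂ : (2 : ℝ) < γ := by norm_cast; omega
  set r : ℝ := (γ : ℝ)⁻¹
  have hr₀ : 0 ≤ r := by positivity
  have hr₁ : r < 1 := inv_lt_one_of_one_lt₀ (by linarith)
  have hlam_le : ∀ i ∈ Ioc 1 n, lam i ≤ r ^ (i - 1) / (1 - r) := by
    intro i hi
    obtain ⟨hi₁, hin⟩ := mem_Ioc.1 hi
    rw [hlam i hi₁ hin]
    simp_rw [← inv_pow]
    refine tsum_pow_le_of_add_le hr₀ hr₁ fun ℓ => ?_
    calc i - 1 + ℓ ≤ (i - 1) * (ℓ + 1) := by nlinarith [show 1 ≤ i - 1 by omega]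
      _ ≤ (i - 1) * β (ℓ + 1) :=
        Nat.mul_le_mul_left _ (hβ (ℓ + 1) ▸ le_sum_range_pow (by omega) (ℓ + 1))
  calc ∑ i ∈ Icc 1 n, lam i = 1 + ∑ i ∈ Ioc 1 n, lam i := by
        rw [Icc_eq_cons_Ioc (by omega), sum_cons, hlam1]
    _ ≤ 1 + (∑ i ∈ Ioc 1 n, r ^ (i - 1)) / (1 - r) := by
        rw [sum_div]
        gcongr with i hi
        exact hlam_le i hi
    _ ≤ 1 + r / (1 - r) ^ 2 := by
        rw [sq, ← div_div]
        gcongr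
        exact sum_Ioc_one_pow_sub_one_le hr₀ hr₁ n
    _ < (γ - 1) / (γ - 2) := one_add_inv_div_one_sub_inv_sq_lt hγ₂
end

section
/- Let (θ_p)_{p∈P} be a finite family of ν-Lipschitz functions ℝ → ℝ with pairwise disjoint supports, and let (c_p)_{p∈P} be real coefficients with |c_p| ≤ E for all p. Then the function φ(x) = Σ_{p∈P} c_p θ_p(x) is (νE)-Lipschitz continuous, provided each θ_p takes values in [0,1]. -/
/-!
On `[x, y]` the sum agrees with one bump near `x` and with one bump near `y`. If these are the same
bump, its own Lipschitz bound applies. Otherwise the segment, being connected, cannot be covered by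
the two disjoint closed supports, so both bumps vanish at some `z` in between, and
`|φ x - φ y| ≤ ν E |x - z| + ν E |z - y| = ν E |x - y|`.
-/

open Set

theorem IsPreconnected.exists_notMem_of_disjoint {X : Type*} [TopologicalSpace X] {S s t : Set X}
    (hS : IsPreconnected S) (hs : IsClosed s) (ht : IsClosed t) (hst : Disjoint s t)
    {x y : X} (hxS : x ∈ S) (hyS : y ∈ S) (hx : x ∉ t) (hy : y ∉ s) :
    ∃ z ∈ S, z ∉ s ∧ z ∉ t := by
  by_contra! hcover
  have hSst : S ⊆ s ∪ t := fun z hz => by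
    by_cases hzs : z ∈ s
    · exact Or.inl hzs
    · exact Or.inr (hcover z hz hzs)
  obtain ⟨z, -, hzs, hzt⟩ := isPreconnected_closed_iff.mp hS s t hs ht hSst
    ⟨x, hxS, (hSst hxS).resolve_right hx⟩ ⟨y, hyS, (hSst hyS).resolve_left hy⟩
  exact disjoint_left.mp hst hzs hzt

theorem exists_forall_ne_notMem_tsupport {ι X M : Type*} [Nonempty ι] [TopologicalSpace X]
    [Zero M] {f : ι → X → M} (hf : Pairwise fun i j => Disjoint (tsupport (f i)) (tsupport (f j)))
    (x : X) : ∃ i, ∀ j ≠ i, x ∉ tsupport (f j) := by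
  by_cases hx : ∃ i, x ∈ tsupport (f i)
  · obtain ⟨i, hi⟩ := hx
    exact ⟨i, fun j hji hj => disjoint_left.mp (hf hji) hj hi⟩
  · exact ⟨Classical.arbitrary ι, fun j _ hj => hx ⟨j, hj⟩⟩

theorem LipschitzWith.sum_of_pairwise_disjoint_tsupport {ι F E : Type*} [Fintype ι]
    [SeminormedAddCommGroup F] [NormedSpace ℝ F] [SeminormedAddCommGroup E] {K : NNReal}
    {f : ι → F → E} (hf : ∀ i, LipschitzWith K (f i))
    (hd : Pairwise fun i j => Disjoint (tsupport (f i)) (tsupport (f j))) :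
    LipschitzWith K (fun x => ∑ i, f i x) := by
  rcases isEmpty_or_nonempty ι with hι | hι
  · simpa using (LipschitzWith.const (α := F) (0 : E)).weaken bot_le
  refine LipschitzWith.of_dist_le_mul fun x y => ?_
  obtain ⟨i, hi⟩ := exists_forall_ne_notMem_tsupport hd x
  obtain ⟨j, hj⟩ := exists_forall_ne_notMem_tsupport hd y
  rw [Fintype.sum_eq_single i fun k hk => image_eq_zero_of_notMem_tsupport (hi k hk),
    Fintype.sum_eq_single j fun k hk => image_eq_zero_of_notMem_tsupport (hj k hk)]
  rcases eq_or_ne i j with rfl | hij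
  · exact (hf i).dist_le_mul x y
  obtain ⟨z, hz, hzi, hzj⟩ := (convex_segment x y).isPreconnected.exists_notMem_of_disjoint
    (isClosed_tsupport _) (isClosed_tsupport _) (hd hij) (left_mem_segment ℝ x y)
    (right_mem_segment ℝ x y) (hi j hij.symm) (hj i hij)
  calc dist (f i x) (f j y) ≤ dist (f i x) (f i z) + dist (f j z) (f j y) := by
        rw [image_eq_zero_of_notMem_tsupport hzi, image_eq_zero_of_notMem_tsupport hzj]
        exact dist_triangle _ _ _
    _ ≤ K * dist x z + K * dist z y := add_le_add ((hf i).dist_le_mul x z) ((hf j).dist_le_mul z y)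
    _ = K * dist x y := by rw [← mul_add, dist_add_dist_of_mem_segment hz]

theorem disjoint_bumps_lipschitz_general {P : Type*} [Fintype P] (ν E : NNReal)
    (θ : P → ℝ → ℝ) (c : P → ℝ)
    (hlip : ∀ p, LipschitzWith ν (θ p))
    (hdisj : Pairwise fun p q => Disjoint (tsupport (θ p)) (tsupport (θ q)))
    (hc : ∀ p, |c p| ≤ E) :
    LipschitzWith (ν * E) (fun x => ∑ p, c p * θ p x) := by
  refine LipschitzWith.sum_of_pairwise_disjoint_tsupport (f := fun p x => c p * θ p x)
    (fun p => ?_) fun p q hpq => (hdisj hpq).mono tsupport_mul_subset_right tsupport_mul_subset_right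
  have hcE : ‖c p‖₊ ≤ E := by
    rw [← NNReal.coe_le_coe, coe_nnnorm, Real.norm_eq_abs]
    exact hc p
  rw [mul_comm ν]
  exact ((lipschitzWith_smul (c p)).comp (hlip p)).weaken (mul_le_mul_left hcE ν)

/-- A finite linear combination `φ = ∑ c_p θ_p` of `ν`-Lipschitz functions
with values in `[0,1]` and pairwise disjoint supports, with `|c_p| ≤ E`,
is `(ν·E)`-Lipschitz. -/
theorem disjoint_bumps_lipschitz {P : Type*} [Fintype P] (ν E : NNReal)
    (θ : P → ℝ → ℝ) (c : P → ℝ)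
    (hlip : ∀ p, LipschitzWith ν (θ p))
    (hrange : ∀ p x, θ p x ∈ Set.Icc (0 : ℝ) 1)
    (hdisj : Pairwise fun p q => Disjoint (tsupport (θ p)) (tsupport (θ q)))
    (hc : ∀ p, |c p| ≤ E) :
    LipschitzWith (ν * E) (fun x => ∑ p, c p * θ p x) :=
  disjoint_bumps_lipschitz_general ν E θ c hlip hdisj hc
end
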